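/- arXiv:0804.1605 — 4 statements merged into one kernel-verified Lean document; each statement's English description precedes it below -/
import Mathlib

section
/- Let P : [−1,1] → ℝ and define Ψ*(h) = ∫₀^β P*(h(t)) dt for h ∈ L²(S_β), where P*(c) = sup_{x∈[−1,1]}(cx − P(x)) is the Legendre transform of P. Suppose Λ : L²(S_β) → ℝ is rotation-invariant and satisfies Λ(h) ≤ (1/β)∫₀^β Λ(h(t)·1)dt. Then sup_{h∈L²(S_β)} { Λ(h) − Ψ*(h) } = sup_{c∈ℝ} { Λ(c·1) − β·P*(c) }. -/
open MeasureTheory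

/-- One-dimensional Legendre transform P*(c) = sup_{x ∈ [−1,1]} (cx − P(x)). -/
noncomputable def Pstar (P : ℝ → ℝ) (c : ℝ) : ℝ :=
  ⨆ x : Set.Icc (-1:ℝ) 1, (c * (x : ℝ) - P x)

/-!
Constant fields are admissible, which gives `≥`. Conversely, if `Λ(c·1) − β P*(c) ≤ M` for
all `c`, integrating this at `c = h(t)` over `[0, β]` and dividing by `β` bounds the right-hand
side of the chessboard estimate, so `Λ(h) − Ψ*(h) ≤ M`.
-/

theorem sub_integral_le_of_chessboard {β M : ℝ} (hβ : 0 < β) {Λ : (ℝ → ℝ) → ℝ}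
    {φ h : ℝ → ℝ} (hΛ : IntervalIntegrable (fun t => Λ (fun _ => h t)) volume 0 β)
    (hφ : IntervalIntegrable (fun t => φ (h t)) volume 0 β)
    (hchess : Λ h ≤ (1 / β) * ∫ t in (0:ℝ)..β, Λ (fun _ => h t))
    (hM : ∀ c, Λ (fun _ => c) - β * φ c ≤ M) :
    Λ h - ∫ t in (0:ℝ)..β, φ (h t) ≤ M := by
  set I := ∫ t in (0:ℝ)..β, Λ (fun _ => h t)
  set J := ∫ t in (0:ℝ)..β, φ (h t)
  have hint : I - β * J ≤ β * M :=
    calc I - β * J = ∫ t in (0:ℝ)..β, (Λ (fun _ => h t) - β * φ (h t)) := by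
          rw [intervalIntegral.integral_sub hΛ (hφ.const_mul β),
            intervalIntegral.integral_const_mul]
      _ ≤ ∫ _ in (0:ℝ)..β, M :=
          intervalIntegral.integral_mono_on hβ.le (hΛ.sub (hφ.const_mul β))
            intervalIntegrable_const fun t _ => hM (h t)
      _ = β * M := by simp
  calc Λ h - J ≤ (1 / β) * (I - β * J) := by
        rw [mul_sub, ← mul_assoc, one_div_mul_cancel hβ.ne', one_mul]
        linarith
    _ ≤ (1 / β) * (β * M) := by gcongr
    _ = M := by field_simp

theorem stmt11_general (β : ℝ) (hβ : 0 < β) (P : ℝ → ℝ) (Λ : (ℝ → ℝ) → ℝ)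
    (S : Set (ℝ → ℝ))
    (hS : S = {h : ℝ → ℝ | Function.Periodic h β ∧ Measurable h ∧
      IntervalIntegrable (fun t => (h t) ^ 2) volume 0 β ∧
      IntervalIntegrable (fun t => Λ (fun _ => h t)) volume 0 β ∧
      IntervalIntegrable (fun t => Pstar P (h t)) volume 0 β})
    (hchess : ∀ h ∈ S, Λ h ≤ (1 / β) * ∫ t in (0:ℝ)..β, Λ (fun _ => h t))
    (hbddB : BddAbove {x : ℝ | ∃ c : ℝ, x = Λ (fun _ => c) - β * Pstar P c}) :
    sSup {x : ℝ | ∃ h ∈ S, x = Λ h - ∫ t in (0:ℝ)..β, Pstar P (h t)} =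
      sSup {x : ℝ | ∃ c : ℝ, x = Λ (fun _ => c) - β * Pstar P c} := by
  set A := {x : ℝ | ∃ h ∈ S, x = Λ h - ∫ t in (0:ℝ)..β, Pstar P (h t)}
  set B := {x : ℝ | ∃ c : ℝ, x = Λ (fun _ => c) - β * Pstar P c}
  have hle : ∀ x ∈ A, x ≤ sSup B := by
    rintro _ ⟨h, hhS, rfl⟩
    obtain ⟨-, -, -, hΛ, hφ⟩ := hS ▸ hhS
    exact sub_integral_le_of_chessboard hβ hΛ hφ (hchess h hhS) fun c =>
      le_csSup hbddB ⟨c, rfl⟩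
  have hBA : B ⊆ A := by
    rintro _ ⟨c, rfl⟩
    refine ⟨fun _ => c, hS ▸ ⟨fun _ => rfl, measurable_const, intervalIntegrable_const,
      intervalIntegrable_const, intervalIntegrable_const⟩, by simp⟩
  have hB : B.Nonempty := ⟨_, 0, rfl⟩
  exact le_antisymm (csSup_le (hB.mono hBA) hle) (csSup_le_csSup ⟨_, hle⟩ hB hBA)

/-- reduction to constant fields. If Λ on β-periodic L² fields is
rotation invariant and satisfies the chessboard estimate
Λ(h) ≤ (1/β)∫₀^β Λ(h(t)·1)dt, then
sup_h { Λ(h) − ∫₀^β P*(h(t))dt } = sup_c { Λ(c·1) − β·P*(c) }. -/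
theorem stmt11 (β : ℝ) (hβ : 0 < β) (P : ℝ → ℝ) (Λ : (ℝ → ℝ) → ℝ)
    (S : Set (ℝ → ℝ))
    (hS : S = {h : ℝ → ℝ | Function.Periodic h β ∧ Measurable h ∧
      IntervalIntegrable (fun t => (h t) ^ 2) volume 0 β ∧
      IntervalIntegrable (fun t => Λ (fun _ => h t)) volume 0 β ∧
      IntervalIntegrable (fun t => Pstar P (h t)) volume 0 β})
    (hrot : ∀ h ∈ S, ∀ s : ℝ, Λ (fun t => h (s + t)) = Λ h)
    (hchess : ∀ h ∈ S, Λ h ≤ (1 / β) * ∫ t in (0:ℝ)..β, Λ (fun _ => h t))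
    (hbddB : BddAbove {x : ℝ | ∃ c : ℝ, x = Λ (fun _ => c) - β * Pstar P c}) :
    sSup {x : ℝ | ∃ h ∈ S, x = Λ h - ∫ t in (0:ℝ)..β, Pstar P (h t)} =
      sSup {x : ℝ | ∃ c : ℝ, x = Λ (fun _ => c) - β * Pstar P c} :=
  stmt11_general β hβ P Λ S hS hchess hbddB
end

section
/- Let ξ be a Poisson process of intensity λ on the circle S_β, and fix t ∈ (0, β). Let {0 ↔ t} be the event that 0 and t lie in the same connected component of S_β \ ξ. Then E[ 1_{0↔t} · 2^{#(ξ)} ] = e^{λ(β−2t)} + e^{−λ(β−2t)}. -/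
/-!
Let `N₁ ~ Poi(b)` and `N₂ ~ Poi(a)` be the independent point counts on the arcs `(0, t)` and
`(t, β)`, so `b = λt` and `a = λ(β - t)`. Since `{0 ↔ t}` says that one arc is empty,
`1_{0↔t} 2^{#ξ} = 2^{N₁} 1_{N₂ = 0} + 2^{N₂} 1_{N₁ = 0}`; when `ξ = ∅` both terms are `1`,
adding up to `2^{#ξ} = 2`. The generating function `E[2^N] = e^x` of `N ~ Poi(x)` then gives
`E[1_{0↔t} 2^{#ξ}] = e^b e^{-a} + e^{-b} e^a`.
-/

open Real Nat

noncomputable def poissonWeight (x : ℝ) (n : ℕ) : ℝ := exp (-x) * x ^ n / n !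

lemma hasSum_poissonWeight_mul_pow (x z : ℝ) :
    HasSum (fun n => poissonWeight x n * z ^ n) (exp ((z - 1) * x)) := by
  have h := (NormedSpace.expSeries_div_hasSum_exp (z * x)).mul_left (exp (-x))
  rw [← exp_eq_exp_ℝ, ← exp_add, show -x + z * x = (z - 1) * x by ring] at h
  refine h.congr_fun fun n => ?_
  simp only [poissonWeight, mul_pow]
  ring

lemma HasSum.mul_real {ι κ : Type*} {f : ι → ℝ} {g : κ → ℝ} {s t : ℝ}
    (hf : HasSum f s) (hg : HasSum g t) :
    HasSum (fun p : ι × κ => f p.1 * g p.2) (s * t) :=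
  hf.mul hg <| summable_mul_of_summable_norm (summable_norm_iff.2 hf.summable)
    (summable_norm_iff.2 hg.summable)

lemma ite_eq_zero_or_two_pow_max_eq_add (m n : ℕ) :
    (if m = 0 ∨ n = 0 then (2 : ℝ) ^ max (m + n) 1 else 0)
      = (if n = 0 then 2 ^ m else 0) + (if m = 0 then 2 ^ n else 0) := by
  rcases m with _ | m <;> rcases n with _ | n <;> simp [one_add_one_eq_two]

lemma hasSum_poissonWeight_mul_connected_two_pow (a b : ℝ) :
    HasSum (fun p : ℕ × ℕ => poissonWeight b p.1 * poissonWeight a p.2 *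
        (if p.1 = 0 ∨ p.2 = 0 then (2 : ℝ) ^ max (p.1 + p.2) 1 else 0))
      (exp (a - b) + exp (-(a - b))) := by
  have hempty (x : ℝ) : HasSum (fun n => if n = 0 then poissonWeight x 0 else 0) (exp (-x)) := by
    simpa [poissonWeight] using hasSum_ite_eq 0 (poissonWeight x 0)
  have h := ((hasSum_poissonWeight_mul_pow b 2).mul_real (hempty a)).add
    ((hempty b).mul_real (hasSum_poissonWeight_mul_pow a 2))
  convert h using 1
  · ext ⟨m, n⟩
    rw [ite_eq_zero_or_two_pow_max_eq_add]
    split_ifs <;> subst_vars <;> ring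
  · rw [← exp_add, ← exp_add]
    ring_nf

theorem stmt13_general (lam β t : ℝ) :
    ∑' p : ℕ × ℕ,
        (Real.exp (-(lam * t)) * (lam * t) ^ p.1 / p.1.factorial) *
          (Real.exp (-(lam * (β - t))) * (lam * (β - t)) ^ p.2 / p.2.factorial) *
          (if p.1 = 0 ∨ p.2 = 0 then (2:ℝ) ^ (max (p.1 + p.2) 1) else 0)
      = Real.exp (lam * (β - 2 * t)) + Real.exp (-(lam * (β - 2 * t))) := by
  have h := hasSum_poissonWeight_mul_connected_two_pow (lam * (β - t)) (lam * t)
  rw [show lam * (β - t) - lam * t = lam * (β - 2 * t) by ring] at h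
  exact h.tsum_eq

/-- for a Poisson process ξ of intensity λ on S_β and t ∈ (0,β),
E[1_{0↔t}·2^{#(ξ)}] = e^{λ(β−2t)} + e^{−λ(β−2t)}.  The numbers of points on the two
arcs (0,t) and (t,β) are independent Poisson(λt) and Poisson(λ(β−t)); the event {0 ↔ t}
is that one of the two arcs carries no point; #(ξ) = max(total number of points, 1). -/
theorem stmt13 (lam β t : ℝ) (hlam : 0 < lam) (hβ : 0 < β) (ht : 0 < t) (htβ : t < β) :
    ∑' p : ℕ × ℕ,
        (Real.exp (-(lam * t)) * (lam * t) ^ p.1 / p.1.factorial) *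
          (Real.exp (-(lam * (β - t))) * (lam * (β - t)) ^ p.2 / p.2.factorial) *
          (if p.1 = 0 ∨ p.2 = 0 then (2:ℝ) ^ (max (p.1 + p.2) 1) else 0)
      = Real.exp (lam * (β - 2 * t)) + Real.exp (-(lam * (β - 2 * t))) :=
  stmt13_general lam β t
end

section
/- Let β > 0 and suppose v > 1 and s₄ > 0. The equation m = v·m − (s₄/(6β))·m³ + R(m), where R(m) = o(m³) as m → 0⁺, has, for v close to 1 from above, a positive solution m*(v) satisfying m*(v) = sqrt(6β(v−1)/s₄)·(1 + o(1)) as v ↓ 1. -/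
open Asymptotics Filter Set Topology

/-!
Put `c = s₄ / (6β)` and `t = v - 1`, so that the equation reads `t m - c m³ + R m = 0`, whose
unperturbed positive root is `a = √(t / c)`. Once `|R m| ≤ c m³ / 2`, the left side is positive
at `a / 2` and negative at `2a`, so the intermediate value theorem yields a root in `[a / 2, 2a]`,
and these roots tend to `0⁺` with `t`. Along them `(m / a)² = c m² / t = 1 / (1 - R m / (c m³))`,
which tends to `1` because `R m = o(m³)`.
-/

theorem tendsto_sqrt_div_nhdsGT_zero (c : ℝ) : Tendsto (fun t => √(t / c)) (𝓝[>] 0) (𝓝 0) := by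
  simpa using ((continuous_id.div_const c).sqrt.tendsto 0).mono_left nhdsWithin_le_nhds

section CubicPerturbation

variable {c : ℝ} {R : ℝ → ℝ}

theorem exists_cubic_root_mem_Icc (hc : 0 < c) {a : ℝ} (ha : 0 < a)
    (hRc : ContinuousOn R (Icc (a / 2) (2 * a)))
    (hRb : ∀ m ∈ Icc (a / 2) (2 * a), |R m| ≤ c / 2 * m ^ 3) :
    ∃ m ∈ Icc (a / 2) (2 * a), c * a ^ 2 * m - c * m ^ 3 + R m = 0 := by
  have hleft : 0 ≤ c * a ^ 2 * (a / 2) - c * (a / 2) ^ 3 + R (a / 2) := by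
    have := (abs_le.1 (hRb _ (left_mem_Icc.2 (by linarith)))).1
    nlinarith [mul_pos hc (pow_pos ha 3)]
  have hright : c * a ^ 2 * (2 * a) - c * (2 * a) ^ 3 + R (2 * a) ≤ 0 := by
    have := (abs_le.1 (hRb _ (right_mem_Icc.2 (by linarith)))).2
    nlinarith [mul_pos hc (pow_pos ha 3)]
  exact intermediate_value_Icc' (by linarith) (by fun_prop) ⟨hright, hleft⟩

theorem Asymptotics.IsLittleO.exists_abs_le_mul_pow_on_Ioo {n : ℕ}
    (hR : R =o[𝓝[>] 0] fun m => m ^ n) {δ : ℝ} (hδ : 0 < δ) :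
    ∃ η > 0, ∀ m ∈ Ioo 0 η, |R m| ≤ δ * m ^ n := by
  obtain ⟨η, hη, hsub⟩ := mem_nhdsGT_iff_exists_Ioo_subset.1 (hR.bound hδ)
  refine ⟨η, hη, fun m hm => ?_⟩
  simpa [abs_of_pos hm.1] using hsub hm

theorem eventually_exists_cubic_root_mem_Icc (hc : 0 < c) (hRc : Continuous R)
    (hR : R =o[𝓝[>] 0] fun m => m ^ 3) :
    ∀ᶠ t in 𝓝[>] 0, ∃ m ∈ Icc (√(t / c) / 2) (2 * √(t / c)),
      t * m - c * m ^ 3 + R m = 0 := by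
  obtain ⟨η, hη, hRη⟩ := hR.exists_abs_le_mul_pow_on_Ioo (half_pos hc)
  filter_upwards [self_mem_nhdsWithin,
    (tendsto_sqrt_div_nhdsGT_zero c).eventually (eventually_lt_nhds (half_pos hη))]
    with t (ht : 0 < t) hsmall
  set a := √(t / c) with ha_def
  have ha : 0 < a := Real.sqrt_pos.2 (div_pos ht hc)
  have hta : t = c * a ^ 2 := by
    rw [ha_def, Real.sq_sqrt (div_pos ht hc).le]; field_simp
  rw [hta]
  exact exists_cubic_root_mem_Icc hc ha hRc.continuousOn
    fun m hm => hRη m ⟨by linarith [hm.1], by linarith [hm.2]⟩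

theorem exists_cubic_root_tendsto_zero (hc : 0 < c) (hRc : Continuous R)
    (hR : R =o[𝓝[>] 0] fun m => m ^ 3) :
    ∃ μ : ℝ → ℝ, Tendsto μ (𝓝[>] 0) (𝓝[>] 0) ∧
      ∀ᶠ t in 𝓝[>] 0, t * μ t - c * μ t ^ 3 + R (μ t) = 0 := by
  obtain ⟨μ, hμ⟩ := (eventually_exists_cubic_root_mem_Icc hc hRc hR).choice
  have hμpos : ∀ᶠ t in 𝓝[>] 0, 0 < μ t := by
    filter_upwards [self_mem_nhdsWithin, hμ] with t (ht : 0 < t) hμt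
    exact (div_pos (Real.sqrt_pos.2 (div_pos ht hc)) two_pos).trans_le hμt.1.1
  have hμ0 : Tendsto μ (𝓝[>] 0) (𝓝 0) := by
    refine tendsto_of_tendsto_of_tendsto_of_le_of_le' tendsto_const_nhds
      (by simpa using (tendsto_sqrt_div_nhdsGT_zero c).const_mul 2)
      (hμpos.mono fun t ht => ht.le) (hμ.mono fun t ht => ht.1.2)
  exact ⟨μ, tendsto_nhdsWithin_iff.2 ⟨hμ0, hμpos⟩, hμ.mono fun t ht => ht.2⟩

theorem tendsto_div_sqrt_of_cubic_root {α : Type*} {l : Filter α} {t m : α → ℝ} (hc : 0 < c)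
    (hR : R =o[𝓝[>] 0] fun m => m ^ 3) (hm : Tendsto m l (𝓝[>] 0))
    (hroot : ∀ᶠ x in l, t x * m x - c * m x ^ 3 + R (m x) = 0) :
    Tendsto (fun x => m x / √(t x / c)) l (𝓝 1) := by
  have hq : Tendsto (fun x => R (m x) / m x ^ 3) l (𝓝 0) := hR.tendsto_div_nhds_zero.comp hm
  have hlim : Tendsto (fun x => √(1 - R (m x) / m x ^ 3 / c)⁻¹) l (𝓝 1) := by
    simpa using ((tendsto_const_nhds (x := (1 : ℝ)).sub (hq.div_const c)).inv₀ (by simp)).sqrt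
  refine hlim.congr' ?_
  filter_upwards [hroot, hm.eventually self_mem_nhdsWithin] with x hx (hpos : 0 < m x)
  have hratio : 1 - R (m x) / m x ^ 3 / c = t x / c / m x ^ 2 := by
    field_simp
    linear_combination -hx
  rw [hratio, inv_div, Real.sqrt_div (sq_nonneg _), Real.sqrt_sq hpos.le]

end CubicPerturbation

/-- critical exponent: for β > 0, s₄ > 0 and a continuous remainder
R(m) = o(m³) as m → 0⁺, the mean-field equation m = v·m − (s₄/(6β))m³ + R(m) has,
for v close to 1 from above, a positive solution m*(v) with
m*(v) = sqrt(6β(v−1)/s₄)·(1 + o(1)) as v ↓ 1. -/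
theorem stmt15 (β s₄ : ℝ) (hβ : 0 < β) (hs : 0 < s₄) (R : ℝ → ℝ)
    (hRcont : Continuous R)
    (hR : R =o[nhdsWithin 0 (Set.Ioi 0)] fun m : ℝ => m ^ 3) :
    ∃ ms : ℝ → ℝ,
      (∀ᶠ v in nhdsWithin 1 (Set.Ioi 1),
        0 < ms v ∧ ms v = v * ms v - s₄ / (6 * β) * (ms v) ^ 3 + R (ms v)) ∧
      Tendsto (fun v => ms v / Real.sqrt (6 * β * (v - 1) / s₄))
        (nhdsWithin 1 (Set.Ioi 1)) (nhds 1) := by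
  have hc : 0 < s₄ / (6 * β) := by positivity
  obtain ⟨μ, hμ, hroot⟩ := exists_cubic_root_tendsto_zero hc hRcont hR
  have hshift : Tendsto (fun v : ℝ => v - 1) (𝓝[>] 1) (𝓝[>] 0) :=
    tendsto_nhdsWithin_iff.2
      ⟨by simpa using ((continuous_sub_right (1 : ℝ)).tendsto 1).mono_left nhdsWithin_le_nhds,
        eventually_nhdsWithin_of_forall fun v (hv : 1 < v) => sub_pos.2 hv⟩
  refine ⟨fun v => μ (v - 1), ?_, ?_⟩
  · filter_upwards [hshift.eventually hroot, (hμ.comp hshift).eventually self_mem_nhdsWithin]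
      with v hv (hpos : 0 < μ (v - 1))
    exact ⟨hpos, by linear_combination -hv⟩
  · have hrescale : ∀ v, 6 * β * (v - 1) / s₄ = (v - 1) / (s₄ / (6 * β)) := fun v => by
      field_simp
    simpa only [hrescale, Function.comp_apply] using
      tendsto_div_sqrt_of_cubic_root hc hR (hμ.comp hshift) (hshift.eventually hroot)
end

section
/- Let β > 0, η > 0, and let U : ℝ → ℝ be even, convex, with U(z) ≥ −2η for all z, and U(z) ≥ |z|·(log|z| − C₀) for some constant C₀ and all |z| ≥ 1. Let m : S_β → ℝ be absolutely continuous with m(0) = m* + 2δ and r = min{t > 0 : m(t) = m* + δ} for some δ ∈ (0,1), m* ≥ 0. Then max{ ∫₀^r (m(t) − m*)² dt , ∫₀^r U(m'(t)) dt − 2ηβ } ≥ e^{−c/δ} for some constant c = c(η, β, C₀) < ∞ and all δ small enough. -/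
/-!
If the hitting time `r` is at least `e^{-c₁/δ}`, then `m - m* ≥ δ` on `[0, r]` already gives
`∫₀^r (m - m*)² ≥ r δ² ≥ e^{-(c₁+2)/δ}`, using `e^{-1/δ} ≤ δ`. If `r < e^{-c₁/δ}`, Jensen's
inequality for the convex `U` at the mean slope `-δ/r` of `m` on `[0, r]`, combined with
`U(z) ≥ |z| (log |z| - C₀)`, gives `∫₀^r U(m') ≥ δ log (δ/r) - δ C₀ ≥ c₁ - 1 - |C₀|`, which is
`2ηβ + 1` for `c₁ = 2ηβ + |C₀| + 2`.
-/

open MeasureTheory Set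

theorem ConvexOn.map_intervalIntegral_div_le {g f : ℝ → ℝ} {a b : ℝ}
    (hg : ConvexOn ℝ univ g) (hab : a < b) (hf : IntervalIntegrable f volume a b)
    (hgf : IntervalIntegrable (g ∘ f) volume a b) :
    g ((∫ x in a..b, f x) / (b - a)) ≤ (∫ x in a..b, g (f x)) / (b - a) := by
  have hvol : volume (uIoc a b) = ENNReal.ofReal (b - a) := by
    rw [uIoc_of_le hab.le, Real.volume_Ioc]
  have jensen := hg.map_set_average_le (hg.continuousOn isOpen_univ) isClosed_univ
    (by simpa [hvol] using hab) (by simp [hvol]) (.of_forall fun _ ↦ mem_univ _)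
    hf.def' hgf.def'
  rwa [← interval_average_eq_div, ← interval_average_eq_div]

theorem ContinuousOn.of_eq_add_intervalIntegral {m f : ℝ → ℝ} {a b : ℝ}
    (hf : IntervalIntegrable f volume a b)
    (hm : ∀ t ∈ Icc a b, m t = m a + ∫ u in a..t, f u) : ContinuousOn m (Icc a b) :=
  ((intervalIntegral.continuousOn_primitive_interval' hf left_mem_uIcc).mono
    Icc_subset_uIcc |>.const_add (m a)).congr hm

theorem Real.exp_neg_one_div_le {δ : ℝ} (hδ : 0 < δ) : Real.exp (-1 / δ) ≤ δ := by
  rw [neg_div, Real.exp_neg, inv_le_comm₀ (Real.exp_pos _) hδ, ← one_div]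
  linarith [Real.add_one_le_exp (1 / δ)]

theorem mul_le_intervalIntegral_of_le {f : ℝ → ℝ} {a b c : ℝ} (hab : a ≤ b)
    (hf : IntervalIntegrable f volume a b) (hc : ∀ t ∈ Icc a b, c ≤ f t) :
    (b - a) * c ≤ ∫ t in a..b, f t := by
  simpa [mul_comm] using intervalIntegral.integral_mono_on hab intervalIntegrable_const hf hc

theorem mul_log_div_sub_le_mul_map_div {U : ℝ → ℝ} {C₀ r x : ℝ}
    (hU : ∀ z : ℝ, 1 ≤ |z| → |z| * (Real.log |z| - C₀) ≤ U z) (hr : 0 < r) (hx : r ≤ |x|) :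
    |x| * (Real.log (|x| / r) - C₀) ≤ r * U (x / r) := by
  have hz : |x / r| = |x| / r := by rw [abs_div, abs_of_pos hr]
  have := hU (x / r) (by rwa [hz, one_le_div hr])
  rw [hz] at this
  calc |x| * (Real.log (|x| / r) - C₀) = r * (|x| / r * (Real.log (|x| / r) - C₀)) := by
        field_simp
    _ ≤ r * U (x / r) := by gcongr

theorem sub_one_lt_mul_log_div {c δ r : ℝ} (hδ : 0 < δ) (hr : 0 < r)
    (hrc : r < Real.exp (-c / δ)) : c - 1 < δ * Real.log (δ / r) := by
  have hlog_r : δ * Real.log r < -c := by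
    rw [← Real.log_lt_iff_lt_exp hr, lt_div_iff₀ hδ] at hrc
    linarith
  have hlog_δ : δ - 1 ≤ δ * Real.log δ := by
    have := mul_le_mul_of_nonneg_left (Real.one_sub_inv_le_log_of_pos hδ) hδ.le
    rwa [mul_sub, mul_inv_cancel₀ hδ.ne', mul_one] at this
  rw [Real.log_div hδ.ne' hr.ne']
  linarith

theorem exp_neg_add_two_div_le_intervalIntegral_sq_sub {m : ℝ → ℝ} {c δ r mstar : ℝ}
    (hδ : 0 < δ) (hr : Real.exp (-c / δ) ≤ r) (hm : ContinuousOn m (Icc 0 r))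
    (hm_ge : ∀ t ∈ Icc 0 r, mstar + δ ≤ m t) :
    Real.exp (-(c + 2) / δ) ≤ ∫ t in (0:ℝ)..r, (m t - mstar) ^ 2 := by
  have hr0 : 0 ≤ r := (Real.exp_pos _).le.trans hr
  calc Real.exp (-(c + 2) / δ) = Real.exp (-c / δ) * Real.exp (-1 / δ) ^ 2 := by
        rw [← Real.exp_nat_mul, ← Real.exp_add]; ring_nf
    _ ≤ (r - 0) * δ ^ 2 := by
        rw [sub_zero]; gcongr; exact Real.exp_neg_one_div_le hδ
    _ ≤ ∫ t in (0:ℝ)..r, (m t - mstar) ^ 2 :=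
        mul_le_intervalIntegral_of_le hr0
          (((hm.sub continuousOn_const).pow 2).intervalIntegrable_of_Icc hr0)
          fun t ht ↦ by have := hm_ge t ht; gcongr; linarith

theorem sub_lt_intervalIntegral_map_of_lt_exp {U f : ℝ → ℝ} {C₀ c δ r : ℝ}
    (hUconv : ConvexOn ℝ univ U)
    (hUgrowth : ∀ z : ℝ, 1 ≤ |z| → |z| * (Real.log |z| - C₀) ≤ U z)
    (hc : 1 ≤ c) (hδ : 0 < δ) (hδ1 : δ ≤ 1) (hr : 0 < r) (hr_small : r < Real.exp (-c / δ))
    (hf : IntervalIntegrable f volume 0 r) (hUf : IntervalIntegrable (U ∘ f) volume 0 r)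
    (hf_int : |∫ t in (0:ℝ)..r, f t| = δ) :
    c - 1 - |C₀| < ∫ t in (0:ℝ)..r, U (f t) := by
  have hrδ : r ≤ δ := by
    refine hr_small.le.trans ((Real.exp_le_exp.2 ?_).trans (Real.exp_neg_one_div_le hδ))
    gcongr
  have hjensen := hUconv.map_intervalIntegral_div_le hr hf hUf
  rw [sub_zero, le_div_iff₀ hr] at hjensen
  have hgrowth := mul_log_div_sub_le_mul_map_div hUgrowth hr (hf_int.symm ▸ hrδ)
  rw [hf_int] at hgrowth
  have hC₀ : δ * C₀ ≤ |C₀| :=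
    (mul_le_mul_of_nonneg_left (le_abs_self C₀) hδ.le).trans
      (mul_le_of_le_one_left (abs_nonneg C₀) hδ1)
  linarith [sub_one_lt_mul_log_div hδ hr hr_small]

theorem stmt16_general (β η C₀ : ℝ) (hβ : 0 < β) (hη : 0 < η) (U : ℝ → ℝ)
    (hUconv : ConvexOn ℝ Set.univ U)
    (hUgrowth : ∀ z : ℝ, 1 ≤ |z| → |z| * (Real.log |z| - C₀) ≤ U z) :
    ∃ c : ℝ, ∃ δ₀ > (0:ℝ), ∀ δ mstar r : ℝ, ∀ m m' : ℝ → ℝ,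
      0 < δ → δ < δ₀ → 0 ≤ mstar → 0 < r → r ≤ β →
      IntervalIntegrable m' volume 0 β →
      (∀ s ∈ Set.Icc (0:ℝ) β, ∀ t ∈ Set.Icc (0:ℝ) β,
        m t - m s = ∫ u in s..t, m' u) →
      IntervalIntegrable (fun t => U (m' t)) volume 0 r →
      m 0 = mstar + 2 * δ → m r = mstar + δ →
      (∀ t ∈ Set.Ico (0:ℝ) r, mstar + δ < m t) →
      Real.exp (-c / δ) ≤
        max (∫ t in (0:ℝ)..r, (m t - mstar) ^ 2)
          ((∫ t in (0:ℝ)..r, U (m' t)) - 2 * η * β) := by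
  set c₁ := 2 * η * β + |C₀| + 2
  have hc₁ : 1 ≤ c₁ := by have := mul_pos hη hβ; have := abs_nonneg C₀; linarith
  refine ⟨c₁ + 2, 1, one_pos, ?_⟩
  intro δ mstar r m m' hδ hδ1 _ hr hrβ hm'int hftc hUint hm0 hmr habove
  have hftc₀ : ∀ t ∈ Icc 0 β, m t - m 0 = ∫ u in (0:ℝ)..t, m' u := hftc 0 ⟨le_rfl, hβ.le⟩
  rcases le_or_gt (Real.exp (-c₁ / δ)) r with hr_large | hr_small
  · have hm_cont : ContinuousOn m (Icc 0 r) :=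
      (ContinuousOn.of_eq_add_intervalIntegral hm'int fun t ht ↦ by
        linarith [hftc₀ t ht]).mono (Icc_subset_Icc_right hrβ)
    have hm_ge : ∀ t ∈ Icc 0 r, mstar + δ ≤ m t := fun t ⟨ht0, htr⟩ ↦
      htr.lt_or_eq.elim (fun htr ↦ (habove t ⟨ht0, htr⟩).le) fun htr ↦ (htr ▸ hmr).ge
    exact (exp_neg_add_two_div_le_intervalIntegral_sq_sub hδ hr_large hm_cont hm_ge).trans
      (le_max_left _ _)
  · have hint : |∫ t in (0:ℝ)..r, m' t| = δ := by
      rw [← hftc₀ r ⟨hr.le, hrβ⟩, hm0, hmr, show mstar + δ - (mstar + 2 * δ) = -δ by ring,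
        abs_neg, abs_of_pos hδ]
    have hcost := sub_lt_intervalIntegral_map_of_lt_exp hUconv hUgrowth hc₁ hδ hδ1.le hr
      hr_small (hm'int.mono_set (uIcc_subset_uIcc_left (mem_uIcc_of_le hr.le hrβ))) hUint hint
    calc Real.exp (-(c₁ + 2) / δ) ≤ 1 := by
          rw [Real.exp_le_one_iff, neg_div, neg_nonpos]; positivity
      _ ≤ (∫ t in (0:ℝ)..r, U (m' t)) - 2 * η * β := by linarith
      _ ≤ _ := le_max_right _ _

/-- sup-norm stability estimate: let U be even, convex, bounded below
by −2η and with U(z) ≥ |z|(log|z| − C₀) for |z| ≥ 1.  There are a constant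
c = c(η,β,C₀) and δ₀ > 0 such that for all δ ∈ (0,δ₀) and every absolutely continuous
trajectory m (with derivative m') on the circle with m(0) = m* + 2δ, first hitting
time r of the level m* + δ, one has
max{ ∫₀^r (m−m*)², ∫₀^r U(m') − 2ηβ } ≥ e^{−c/δ}. -/
theorem stmt16 (β η C₀ : ℝ) (hβ : 0 < β) (hη : 0 < η) (U : ℝ → ℝ)
    (hUeven : ∀ z, U (-z) = U z) (hUconv : ConvexOn ℝ Set.univ U)
    (hUlb : ∀ z, -2 * η ≤ U z)
    (hUgrowth : ∀ z : ℝ, 1 ≤ |z| → |z| * (Real.log |z| - C₀) ≤ U z) :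
    ∃ c : ℝ, ∃ δ₀ > (0:ℝ), ∀ δ mstar r : ℝ, ∀ m m' : ℝ → ℝ,
      0 < δ → δ < δ₀ → 0 ≤ mstar → 0 < r → r ≤ β →
      IntervalIntegrable m' volume 0 β →
      (∀ s ∈ Set.Icc (0:ℝ) β, ∀ t ∈ Set.Icc (0:ℝ) β,
        m t - m s = ∫ u in s..t, m' u) →
      IntervalIntegrable (fun t => U (m' t)) volume 0 r →
      m 0 = mstar + 2 * δ → m r = mstar + δ →
      (∀ t ∈ Set.Ico (0:ℝ) r, mstar + δ < m t) →
      Real.exp (-c / δ) ≤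
        max (∫ t in (0:ℝ)..r, (m t - mstar) ^ 2)
          ((∫ t in (0:ℝ)..r, U (m' t)) - 2 * η * β) :=
  stmt16_general β η C₀ hβ hη U hUconv hUgrowth
end
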